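/- Let p be a prime and let G be a finitely generated indecomposable group such that G/Z(G) ≅ C_p × C_p and Z(G) is cyclic. Then there exist x, y, t₁ ∈ G and an integer m₁ ≥ 1 such that G is generated by {x, y, t₁}, Z(G) = ⟨t₁⟩, t₁ has order p^{m₁}, [x,y] = t₁^{p^{m₁−1}}, and either x^p = 1 and y^p = 1 (so G belongs to family 𝒢₁), or x^p = t₁ and y^p = t₁ (so G belongs to family 𝒢₂). -/

import Mathlib

/-!
Since `G ⧸ Z(G)` is elementary abelian of order `p²`, commutators and `p`-th powers are central,
so `G` has class two: `g ↦ ⁅g, h⁆` is a homomorphism and `(u v)ⁿ = uⁿ vⁿ ⁅v, u⁆ ^ (n choose 2)`.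
Lifting a basis of `G ⧸ Z(G)` gives `a, b` with `G = ⟨a, b⟩ Z(G)` and `⁅a, b⁆ ≠ 1` of order `p`,
so `Z(G) = ⟨c⟩` is finite. The `p'`-part of `⟨c⟩` is central of order coprime to its index, hence
a direct factor by Schur–Zassenhaus, and indecomposability kills it: `Z(G)` has order `pᵐ` and a
generator `t` with `t ^ p ^ (m - 1) = ⁅a, b⁆`.

The substitutions `x ↦ x yʲ`, `(x, y) ↦ (y⁻¹, x)` and multiplication of `x, y` by central elements
keep `⁅x, y⁆` fixed. Writing `xᵖ = tᴬ`, `yᵖ = tᴮ`, they act on `(A, B) mod p` by shears and a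
rotation, shifted by `ε = p ^ (m - 1) * (p choose 2)` (nonzero only when `pᵐ = 2`), and reach
`A = B = 0` or `A = B = 1`.
-/

def IsIndecomposable (G : Type*) [Group G] : Prop :=
  ∀ H K : Subgroup G,
    (∀ h ∈ H, ∀ k ∈ K, Commute h k) →
    H ⊓ K = ⊥ →
    (∀ g : G, ∃ h ∈ H, ∃ k ∈ K, g = h * k) →
    H = ⊥ ∨ K = ⊥

open Subgroup
open scoped commutatorElement

section Commutators

variable {G : Type*} [Group G]

lemma commutatorElement_mul_left_of_mem_center {a b : G} (hb : b ∈ center G) (c : G) :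
    ⁅a * b, c⁆ = ⁅a, c⁆ := by
  rw [commutatorElement_mul_left_eq_conj_mul,
    commutatorElement_eq_one_iff_commute.mpr (mem_center_iff.mp hb c).symm, mul_one,
    mul_inv_cancel, one_mul]

lemma commutatorElement_mul_right_of_mem_center (a b : G) {c : G} (hc : c ∈ center G) :
    ⁅a, b * c⁆ = ⁅a, b⁆ := by
  rw [commutatorElement_mul_right_eq_mul_conj,
    commutatorElement_eq_one_iff_commute.mpr (mem_center_iff.mp hc a), mul_one,
    mul_inv_cancel_right]

/-- `G` has nilpotency class at most two. -/
def HasCentralCommutators (G : Type*) [Group G] : Prop :=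
  ∀ g h : G, ⁅g, h⁆ ∈ center G

namespace HasCentralCommutators

variable (hG : HasCentralCommutators G)
include hG

def commutatorLeftHom (h : G) : G →* G where
  toFun g := ⁅g, h⁆
  map_one' := commutatorElement_one_left h
  map_mul' a b := by
    rw [commutatorElement_mul_left_eq_conj_mul, mem_center_iff.mp (hG b h) a,
      mul_inv_cancel_right, mem_center_iff.mp (hG b h) ⁅a, h⁆]

lemma commutatorElement_mul_left (g₁ g₂ h : G) : ⁅g₁ * g₂, h⁆ = ⁅g₁, h⁆ * ⁅g₂, h⁆ :=
  map_mul (hG.commutatorLeftHom h) g₁ g₂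

lemma commutatorElement_pow_left (g h : G) (n : ℕ) : ⁅g ^ n, h⁆ = ⁅g, h⁆ ^ n :=
  map_pow (hG.commutatorLeftHom h) g n

lemma commutatorElement_zpow_left (g h : G) (n : ℤ) : ⁅g ^ n, h⁆ = ⁅g, h⁆ ^ n :=
  map_zpow (hG.commutatorLeftHom h) g n

lemma commutatorElement_inv_left (g h : G) : ⁅g⁻¹, h⁆ = ⁅h, g⁆ :=
  (map_inv (hG.commutatorLeftHom h) g).trans (commutatorElement_inv g h)

lemma commutatorElement_eq_inv_mul_inv_mul_mul_mul (x y : G) :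
    ⁅x, y⁆ = x⁻¹ * y⁻¹ * x * y := by
  rw [← hG.commutatorElement_inv_left, ← hG.commutatorElement_inv_left, commutatorElement_def,
    inv_inv, inv_inv]

lemma mul_pow (u v : G) (n : ℕ) : (u * v) ^ n = u ^ n * v ^ n * ⁅v, u⁆ ^ n.choose 2 := by
  have hz : ∀ k : ℕ, ⁅v, u⁆ ^ k ∈ center G := fun k => pow_mem (hG v u) k
  induction n with
  | zero => simp
  | succ n ih =>
    have hswap : v ^ n * u = u * v ^ n * ⁅v, u⁆ ^ n := by
      rw [← hG.commutatorElement_pow_left, mem_center_iff.mp (hG _ _), commutatorElement_def]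
      group
    generalize ⁅v, u⁆ = z at hz ih hswap ⊢
    have hc : ∀ (k : ℕ) (g : G), z ^ k * g = g * z ^ k :=
      fun k g => (mem_center_iff.mp (hz k) g).symm
    calc (u * v) ^ (n + 1) = u ^ n * (v ^ n * u) * v * z ^ n.choose 2 := by
          rw [pow_succ, ih, mul_assoc _ _ (u * v), hc]; group
      _ = u ^ n * u * v ^ n * (z ^ n * v) * z ^ n.choose 2 := by
          rw [hswap]; group
      _ = u ^ (n + 1) * v ^ (n + 1) * z ^ (n + 1).choose 2 := by
          rw [hc, Nat.choose_succ_succ, Nat.choose_one_right, pow_add z]; group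

end HasCentralCommutators

end Commutators

section Generation

variable {G : Type*} [Group G]

lemma closure_pair_sup_eq_top_of_mem {K : Subgroup G} {x y x' y' : G}
    (h : closure {x, y} ⊔ K = ⊤) (hx : x ∈ closure {x', y'} ⊔ K)
    (hy : y ∈ closure {x', y'} ⊔ K) : closure {x', y'} ⊔ K = ⊤ := by
  refine top_le_iff.mp (h ▸ sup_le ((closure_le _).mpr ?_) le_sup_right)
  rintro _ (rfl | rfl)
  exacts [hx, hy]

lemma exists_closure_pair_sup_ker_eq_top {H : Type*} [Group H] {f : G →* H}
    (hf : Function.Surjective f) {u v : H} (huv : closure {u, v} = ⊤) :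
    ∃ a b : G, f a = u ∧ closure {a, b} ⊔ f.ker = ⊤ := by
  obtain ⟨a, rfl⟩ := hf u
  obtain ⟨b, rfl⟩ := hf v
  refine ⟨a, b, rfl, ?_⟩
  rw [← comap_map_eq, MonoidHom.map_closure, Set.image_pair, huv, comap_top]

lemma mem_center_of_commute_of_closure_pair_sup_center_eq_top {a b : G} (hab : Commute a b)
    (hgen : closure {a, b} ⊔ center G = ⊤) : a ∈ center G := by
  have : closure {a, b} ⊔ center G ≤ centralizer {a} := by
    refine sup_le ((closure_le _).mpr ?_) (center_le_centralizer _)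
    rintro _ (rfl | rfl)
    · exact mem_centralizer_singleton_iff.mpr rfl
    · exact mem_centralizer_singleton_iff.mpr hab.symm
  rw [hgen] at this
  exact mem_center_iff.mpr fun g => mem_centralizer_singleton_iff.mp (this (mem_top g))

end Generation

section Quotient

variable {G : Type*} [Group G]

lemma MulEquiv.ker_comp_mk' {H : Type*} [Group H] {N : Subgroup G} [N.Normal] (φ : G ⧸ N ≃* H) :
    (φ.toMonoidHom.comp (QuotientGroup.mk' N)).ker = N := by
  ext g
  simp

lemma HasCentralCommutators.of_mulEquiv {A : Type*} [CommGroup A] (φ : G ⧸ center G ≃* A) :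
    HasCentralCommutators G := fun g h => φ.ker_comp_mk' ▸
  Abelianization.commutator_subset_ker _ (commutator_mem_commutator (mem_top g) (mem_top h))

lemma pow_mem_center_of_mulEquiv {H : Type*} [Group H] (φ : G ⧸ center G ≃* H) {n : ℕ}
    (hn : ∀ v : H, v ^ n = 1) (g : G) : g ^ n ∈ center G := by
  rw [← φ.ker_comp_mk', MonoidHom.mem_ker, map_pow, hn]

variable {p : ℕ}

lemma multiplicative_zmod_prod_pow_eq_one
    (v : Multiplicative (ZMod p) × Multiplicative (ZMod p)) : v ^ p = 1 := by
  ext <;> apply Multiplicative.toAdd.injective <;> simp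

lemma closure_ofAdd_one_pair_eq_top [NeZero p] :
    Subgroup.closure {(Multiplicative.ofAdd (1 : ZMod p), 1),
      (1, Multiplicative.ofAdd (1 : ZMod p))} = ⊤ := by
  refine eq_top_iff.mpr fun v _ => ?_
  have hv : v = (Multiplicative.ofAdd (1 : ZMod p), 1) ^ v.1.toAdd.val *
      (1, Multiplicative.ofAdd (1 : ZMod p)) ^ v.2.toAdd.val := by
    ext <;> apply Multiplicative.toAdd.injective <;> simp
  rw [hv]
  exact mul_mem (pow_mem (subset_closure (by simp)) _) (pow_mem (subset_closure (by simp)) _)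

lemma exists_closure_pair_sup_center_eq_top_of_mulEquiv [Fact p.Prime]
    (φ : G ⧸ center G ≃* Multiplicative (ZMod p) × Multiplicative (ZMod p)) :
    ∃ a b : G, closure {a, b} ⊔ center G = ⊤ ∧ a ∉ center G := by
  obtain ⟨a, b, ha, hab⟩ :=
    exists_closure_pair_sup_ker_eq_top (f := φ.toMonoidHom.comp (QuotientGroup.mk' _))
    (φ.surjective.comp (QuotientGroup.mk'_surjective _)) closure_ofAdd_one_pair_eq_top
  rw [φ.ker_comp_mk'] at hab
  refine ⟨a, b, hab, fun h => ?_⟩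
  rw [← φ.ker_comp_mk', MonoidHom.mem_ker, ha] at h
  exact one_ne_zero (congrArg (Multiplicative.toAdd ∘ Prod.fst) h)

lemma card_quotient_center_of_mulEquiv
    (φ : G ⧸ center G ≃* Multiplicative (ZMod p) × Multiplicative (ZMod p)) :
    Nat.card (G ⧸ center G) = p ^ 2 := by
  rw [Nat.card_congr φ.toEquiv, Nat.card_prod, Nat.card_congr Multiplicative.toAdd, Nat.card_zmod,
    sq]

end Quotient

section Cyclic

variable {G : Type*} [Group G]

lemma isOfFinOrder_of_mem_zpowers_of_ne_one {c w : G} (hw : w ∈ zpowers c) (hw1 : w ≠ 1)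
    (hwf : IsOfFinOrder w) : IsOfFinOrder c := by
  obtain ⟨k, rfl⟩ := mem_zpowers_iff.mp hw
  obtain ⟨n, hn, hwn⟩ := isOfFinOrder_iff_zpow_eq_one.mp hwf
  refine isOfFinOrder_iff_zpow_eq_one.mpr ⟨k * n, mul_ne_zero ?_ hn, by rwa [zpow_mul]⟩
  rintro rfl
  exact hw1 (zpow_zero c)

lemma exists_zpowers_eq_and_pow_eq {p m : ℕ} (hp : p.Prime) {c w : G} (hc : orderOf c = p ^ m)
    (hw : w ∈ zpowers c) (hw1 : w ≠ 1) (hwp : w ^ p = 1) :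
    ∃ t, zpowers t = zpowers c ∧ t ^ p ^ (m - 1) = w := by
  have hcfin : IsOfFinOrder c := orderOf_pos_iff.mp (hc ▸ pow_pos hp.pos m)
  obtain ⟨k, rfl⟩ := (Submonoid.mem_powers_iff _ _).mp (hcfin.mem_powers_iff_mem_zpowers.mpr hw)
  have hm : m ≠ 0 := by
    rintro rfl
    exact hw1 (by rw [orderOf_eq_one_iff.mp (hc.trans (pow_zero p)), one_pow])
  have hkp : p ^ (m - 1) * p ∣ k * p := by
    rw [← pow_succ, Nat.sub_add_cancel (Nat.one_le_iff_ne_zero.mpr hm), ← hc]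
    exact orderOf_dvd_of_pow_eq_one (by rwa [pow_mul])
  obtain ⟨v, rfl⟩ := Nat.dvd_of_mul_dvd_mul_right hp.pos hkp
  have hpv : ¬ p ∣ v := by
    rintro ⟨u, rfl⟩
    refine hw1 ?_
    rw [← mul_assoc, ← pow_succ, Nat.sub_add_cancel (Nat.one_le_iff_ne_zero.mpr hm), pow_mul,
      ← hc, pow_orderOf_eq_one, one_pow]
  have hcop : (orderOf c).Coprime v :=
    hc ▸ Nat.Coprime.pow_left m ((hp.coprime_iff_not_dvd).mpr hpv)
  have : Finite (zpowers c) := hcfin.finite_zpowers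
  refine ⟨c ^ v, eq_of_le_of_card_ge (zpowers_le.mpr (pow_mem (mem_zpowers c) v)) ?_, ?_⟩
  · rw [Nat.card_zpowers, Nat.card_zpowers, hcop.orderOf_pow]
  · rw [← pow_mul, mul_comm]

end Cyclic

section Indecomposable

variable {G : Type*} [Group G]

lemma IsIndecomposable.eq_bot_of_le_center (hind : IsIndecomposable G) {N : Subgroup G}
    (hN : N ≤ center G) (hcop : (Nat.card N).Coprime N.index) (hNtop : N ≠ ⊤) : N = ⊥ := by
  have : N.Normal := ⟨fun n hn g => by rwa [mem_center_iff.mp (hN hn) g, mul_inv_cancel_right]⟩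
  obtain ⟨H, hH⟩ := exists_left_complement'_of_coprime hcop
  refine (hind H N (fun h _ k hk => mem_center_iff.mp (hN hk) h) (disjoint_iff.mp hH.disjoint)
    fun g => ?_).resolve_left fun hH' => hNtop ?_
  · obtain ⟨⟨h, k⟩, hhk, -⟩ := hH.existsUnique g
    exact ⟨h, h.2, k, k.2, hhk.symm⟩
  · simpa [hH'] using hH.sup_eq_top

lemma IsIndecomposable.exists_orderOf_eq_prime_pow (hind : IsIndecomposable G) {p k : ℕ}
    (hp : p.Prime) {c : G} (hc : center G = zpowers c) (hcard : Nat.card (G ⧸ center G) = p ^ k)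
    (hZ : center G ≠ ⊤) (hc0 : orderOf c ≠ 0) : ∃ m, orderOf c = p ^ m := by
  set n := orderOf c
  set m := n.factorization p
  set q := n / p ^ m
  have hnq : n = p ^ m * q := (Nat.ordProj_mul_ordCompl_eq_self n p).symm
  -- `N` is the `p'`-part of the centre.
  set N := zpowers (c ^ p ^ m)
  have hNZ : N ≤ center G := hc ▸ zpowers_le.mpr (pow_mem (mem_zpowers c) _)
  have hcardN : Nat.card N = q := by
    rw [Nat.card_zpowers, orderOf_pow_of_dvd (pow_ne_zero _ hp.ne_zero) (Nat.ordProj_dvd n p)]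
  have hindex : N.index = p ^ (k + m) := by
    have h : Nat.card N * N.index = p ^ k * n := by
      rw [card_mul_index, card_eq_card_quotient_mul_card_subgroup (center G), hcard, hc,
        Nat.card_zpowers]
    rw [hcardN, hnq] at h
    exact Nat.eq_of_mul_eq_mul_left (Nat.ordCompl_pos p hc0) (h.trans (by ring))
  have hcop : (Nat.card N).Coprime N.index := by
    rw [hcardN, hindex]
    exact (Nat.Coprime.pow_left _ (Nat.coprime_ordCompl hp hc0)).symm
  have hN := hind.eq_bot_of_le_center hNZ hcop fun h => hZ (top_le_iff.mp (h ▸ hNZ))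
  exact ⟨m, Nat.dvd_antisymm (orderOf_dvd_of_pow_eq_one (zpowers_eq_bot.mp hN))
    (Nat.ordProj_dvd n p)⟩

lemma IsIndecomposable.exists_center_eq_zpowers (hind : IsIndecomposable G) {p k : ℕ}
    (hp : p.Prime) (hG : HasCentralCommutators G) (hpow : ∀ g : G, g ^ p ∈ center G) {a b c : G}
    (hab : ⁅a, b⁆ ≠ 1) (hc : center G = zpowers c) (hcard : Nat.card (G ⧸ center G) = p ^ k) :
    ∃ (t : G) (m : ℕ), 1 ≤ m ∧ center G = zpowers t ∧ orderOf t = p ^ m ∧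
      t ^ p ^ (m - 1) = ⁅a, b⁆ := by
  have := Fact.mk hp
  have habp : ⁅a, b⁆ ^ p = 1 := by
    rw [← hG.commutatorElement_pow_left, commutatorElement_eq_one_iff_commute]
    exact (mem_center_iff.mp (hpow a) b).symm
  have habc : ⁅a, b⁆ ∈ zpowers c := hc ▸ hG a b
  have hZ : center G ≠ ⊤ := fun h =>
    hab (commutatorElement_eq_one_iff_commute.mpr (mem_center_iff.mp (h ▸ mem_top b) a))
  have hc0 : orderOf c ≠ 0 := (isOfFinOrder_of_mem_zpowers_of_ne_one habc hab
    (isOfFinOrder_iff_pow_eq_one.mpr ⟨p, hp.pos, habp⟩)).orderOf_pos.ne'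
  obtain ⟨m, hcm⟩ := hind.exists_orderOf_eq_prime_pow hp hc hcard hZ hc0
  have hm : 1 ≤ m := by
    refine Nat.one_le_iff_ne_zero.mpr fun hm0 => hp.one_lt.ne' (Nat.dvd_one.mp ?_)
    rw [← pow_zero p, ← hm0, ← hcm, ← orderOf_eq_prime habp hab]
    exact orderOf_dvd_of_mem_zpowers habc
  obtain ⟨t, hzt, ht⟩ := exists_zpowers_eq_and_pow_eq hp hcm habc hab habp
  refine ⟨t, m, hm, hc.trans hzt.symm, ?_, ht⟩
  rw [← Nat.card_zpowers, hzt, Nat.card_zpowers, hcm]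

end Indecomposable

lemma ZMod.exists_diag_mem_of_shear_rotate {p : ℕ} [Fact p.Prime] {ε : ZMod p}
    (hε : ε = 0 ∨ p = 2) {S : Set (ZMod p × ZMod p)} (hS : S.Nonempty)
    (shear : ∀ a b j, (a, b) ∈ S → (a + j * (b - ε), b) ∈ S)
    (rotate : ∀ a b, (a, b) ∈ S → (-b, a) ∈ S) :
    ∃ c : ZMod p, (c = 0 ∨ c = 1) ∧ (c, c) ∈ S := by
  obtain ⟨hε2, hε01, h1ε⟩ : ε + ε = 0 ∧ (ε = 0 ∨ ε = 1) ∧ (1 + ε = 0 ∨ 1 + ε = 1) := by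
    rcases hε with rfl | rfl
    · simp
    · fin_cases ε
      exacts [⟨rfl, .inl rfl, .inr rfl⟩, ⟨rfl, .inr rfl, .inl rfl⟩]
  -- shear to `(1 - ε, b)`, rotate to `(-b, 1 - ε)`, shear to `(1 + ε, 1 - ε) = (1 + ε, 1 + ε)`
  have steer : ∀ a b, (a, b) ∈ S → b ≠ ε → (1 + ε, 1 + ε) ∈ S := by
    intro a b hab hb
    have h1 := shear a b ((1 - ε - a) / (b - ε)) hab
    rw [div_mul_cancel₀ _ (sub_ne_zero.mpr hb), add_sub_cancel] at h1
    convert shear _ _ (1 + ε + b) (rotate _ _ h1) using 2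
    · linear_combination (1 + ε + b) * hε2
    · linear_combination hε2
  obtain ⟨⟨a, b⟩, hab⟩ := hS
  by_cases hb : b = ε
  · subst hb
    by_cases ha : a = b
    · subst ha
      exact ⟨a, hε01, hab⟩
    · exact ⟨_, h1ε, steer _ _ (rotate _ _ hab) ha⟩
  · exact ⟨_, h1ε, steer _ _ hab hb⟩

section Normalization

variable {G : Type*} [Group G]

structure GeneratingPair (p m : ℕ) (t x y : G) (A B : ℤ) : Prop where
  closure_sup_center : closure {x, y} ⊔ center G = ⊤
  commutatorElement_eq : ⁅x, y⁆ = t ^ p ^ (m - 1)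
  pow_left : x ^ p = t ^ A
  pow_right : y ^ p = t ^ B

namespace GeneratingPair

variable {p m : ℕ} {t x y : G} {A B : ℤ}

lemma mul_zpow_center (h : GeneratingPair p m t x y A B) (ht : t ∈ center G) (e f : ℤ) :
    GeneratingPair p m t (x * t ^ e) (y * t ^ f) (A + p * e) (B + p * f) := by
  have hte : t ^ e ∈ center G := zpow_mem ht e
  have htf : t ^ f ∈ center G := zpow_mem ht f
  have hmem : ∀ g ∈ ({x * t ^ e, y * t ^ f} : Set G),
      g ∈ closure {x * t ^ e, y * t ^ f} ⊔ center G :=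
    fun g hg => le_sup_left (α := Subgroup G) (subset_closure hg)
  refine ⟨closure_pair_sup_eq_top_of_mem h.closure_sup_center ?_ ?_, ?_, ?_, ?_⟩
  · simpa using mul_mem (hmem (x * t ^ e) (by simp)) (le_sup_right (α := Subgroup G) (inv_mem hte))
  · simpa using mul_mem (hmem (y * t ^ f) (by simp)) (le_sup_right (α := Subgroup G) (inv_mem htf))
  · rw [commutatorElement_mul_left_of_mem_center hte,
      commutatorElement_mul_right_of_mem_center _ _ htf, h.commutatorElement_eq]
  · rw [(show Commute x (t ^ e) from mem_center_iff.mp hte x).mul_pow, h.pow_left,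
      ← zpow_natCast (t ^ e), ← zpow_mul, ← zpow_add, mul_comm e]
  · rw [(show Commute y (t ^ f) from mem_center_iff.mp htf y).mul_pow, h.pow_right,
      ← zpow_natCast (t ^ f), ← zpow_mul, ← zpow_add, mul_comm f]

lemma mul_zpow_right (hG : HasCentralCommutators G) (h : GeneratingPair p m t x y A B) (j : ℤ) :
    GeneratingPair p m t (x * y ^ j) y (A + j * B - j * ↑(p ^ (m - 1) * p.choose 2)) B := by
  have hy : y ∈ closure {x * y ^ j, y} ⊔ center G :=
    le_sup_left (α := Subgroup G) (subset_closure (by simp))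
  refine ⟨closure_pair_sup_eq_top_of_mem h.closure_sup_center ?_ hy, ?_, ?_, h.pow_right⟩
  · have hxy : x * y ^ j ∈ closure {x * y ^ j, y} ⊔ center G :=
      le_sup_left (α := Subgroup G) (subset_closure (by simp))
    simpa using mul_mem hxy (inv_mem (zpow_mem hy j))
  · rw [hG.commutatorElement_mul_left, hG.commutatorElement_zpow_left, commutatorElement_self,
      one_zpow, mul_one, h.commutatorElement_eq]
  · have hyj : (y ^ j) ^ p = t ^ (j * B) := by
      rw [← zpow_natCast, ← zpow_mul, mul_comm, zpow_mul, zpow_natCast, h.pow_right, ← zpow_mul,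
        mul_comm]
    have hyx : ⁅y ^ j, x⁆ = t ^ (-(j * ↑(p ^ (m - 1)))) := by
      rw [hG.commutatorElement_zpow_left, ← commutatorElement_inv, h.commutatorElement_eq,
        ← zpow_natCast, ← zpow_neg, ← zpow_mul, neg_mul, mul_comm]
    rw [hG.mul_pow, h.pow_left, hyj, hyx, ← zpow_natCast (t ^ _), ← zpow_mul, ← zpow_add,
      ← zpow_add]
    congr 1
    push_cast
    ring

lemma rotate (hG : HasCentralCommutators G) (h : GeneratingPair p m t x y A B) :
    GeneratingPair p m t y⁻¹ x (-B) A := by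
  have hy : y⁻¹ ∈ closure {y⁻¹, x} ⊔ center G :=
    le_sup_left (α := Subgroup G) (subset_closure (by simp))
  have hx : x ∈ closure {y⁻¹, x} ⊔ center G :=
    le_sup_left (α := Subgroup G) (subset_closure (by simp))
  refine ⟨closure_pair_sup_eq_top_of_mem h.closure_sup_center hx (by simpa using inv_mem hy), ?_,
    ?_, h.pow_left⟩
  · rw [hG.commutatorElement_inv_left, h.commutatorElement_eq]
  · rw [inv_pow, h.pow_right, zpow_neg]

lemma exists_of_intCast_eq (h : GeneratingPair p m t x y A B) (ht : t ∈ center G) {C : ℤ}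
    (hA : (A : ZMod p) = C) (hB : (B : ZMod p) = C) :
    ∃ x' y' : G, GeneratingPair p m t x' y' C C := by
  obtain ⟨e, he⟩ := (ZMod.intCast_eq_intCast_iff_dvd_sub A C p).mp hA
  obtain ⟨f, hf⟩ := (ZMod.intCast_eq_intCast_iff_dvd_sub B C p).mp hB
  refine ⟨x * t ^ e, y * t ^ f, ?_⟩
  convert h.mul_zpow_center ht e f using 1 <;> linarith

lemma exists_diag (hp : p.Prime) (hG : HasCentralCommutators G) (ht : t ∈ center G)
    (h : GeneratingPair p m t x y A B) :
    ∃ (x' y' : G) (C : ℤ), (C = 0 ∨ C = 1) ∧ GeneratingPair p m t x' y' C C := by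
  have := Fact.mk hp
  -- the exponent of `t` in the factor `⁅y, x⁆ ^ p.choose 2` of `(x * y) ^ p`
  set ε : ZMod p := ((p ^ (m - 1) * p.choose 2 : ℕ) : ZMod p)
  have hε : ε = 0 ∨ p = 2 := or_iff_not_imp_right.mpr fun hp2 =>
    (ZMod.natCast_eq_zero_iff _ _).mpr (dvd_mul_of_dvd_right
      (hp.dvd_choose_self two_ne_zero (lt_of_le_of_ne hp.two_le (Ne.symm hp2))) _)
  obtain ⟨c, hc, x', y', A', B', h', hA', hB'⟩ := ZMod.exists_diag_mem_of_shear_rotate hε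
    (S := {ab | ∃ x y A B, GeneratingPair p m t x y A B ∧
      (A : ZMod p) = ab.1 ∧ (B : ZMod p) = ab.2})
    ⟨((A : ZMod p), (B : ZMod p)), x, y, A, B, h, rfl, rfl⟩
    (by
      rintro _ _ j ⟨x, y, A, B, h, rfl, rfl⟩
      refine ⟨_, _, _, _, h.mul_zpow_right hG j.val, ?_, rfl⟩
      push_cast [ε, ZMod.natCast_zmod_val]
      ring)
    (by
      rintro _ _ ⟨x, y, A, B, h, rfl, rfl⟩
      exact ⟨_, _, _, _, h.rotate hG, by push_cast; rfl, rfl⟩)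
  obtain ⟨C, hC, rfl⟩ : ∃ C : ℤ, (C = 0 ∨ C = 1) ∧ (C : ZMod p) = c := by
    rcases hc with rfl | rfl
    exacts [⟨0, .inl rfl, Int.cast_zero⟩, ⟨1, .inr rfl, Int.cast_one⟩]
  obtain ⟨x'', y'', h''⟩ := h'.exists_of_intCast_eq ht hA' hB'
  exact ⟨x'', y'', C, hC, h''⟩

end GeneratingPair

end Normalization

theorem rank_one_classification_general (p : ℕ) (hp : p.Prime) (G : Type*) [Group G]
    (hind : IsIndecomposable G)
    (hq : Nonempty ((G ⧸ Subgroup.center G) ≃*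
      Multiplicative (ZMod p) × Multiplicative (ZMod p)))
    (hcyc : ∃ c : G, Subgroup.center G = Subgroup.zpowers c) :
    ∃ (x y t₁ : G) (m₁ : ℕ), 1 ≤ m₁ ∧
      Subgroup.closure {x, y, t₁} = ⊤ ∧
      Subgroup.center G = Subgroup.zpowers t₁ ∧
      orderOf t₁ = p ^ m₁ ∧
      x⁻¹ * y⁻¹ * x * y = t₁ ^ p ^ (m₁ - 1) ∧
      ((x ^ p = 1 ∧ y ^ p = 1) ∨ (x ^ p = t₁ ∧ y ^ p = t₁)) := by
  obtain ⟨φ⟩ := hq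
  obtain ⟨c, hc⟩ := hcyc
  have := Fact.mk hp
  have hG := HasCentralCommutators.of_mulEquiv φ
  have hpow := pow_mem_center_of_mulEquiv φ multiplicative_zmod_prod_pow_eq_one
  obtain ⟨a, b, hab, ha⟩ := exists_closure_pair_sup_center_eq_top_of_mulEquiv φ
  have hab1 : ⁅a, b⁆ ≠ 1 := fun h => ha (mem_center_of_commute_of_closure_pair_sup_center_eq_top
    (commutatorElement_eq_one_iff_commute.mp h) hab)
  obtain ⟨t, m, hm, hZt, hcm, ht⟩ := hind.exists_center_eq_zpowers hp hG hpow hab1 hc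
    (card_quotient_center_of_mulEquiv φ)
  obtain ⟨A, hA⟩ := mem_zpowers_iff.mp (hZt ▸ hpow a)
  obtain ⟨B, hB⟩ := mem_zpowers_iff.mp (hZt ▸ hpow b)
  obtain ⟨x, y, C, hC, hxy⟩ := GeneratingPair.exists_diag hp hG (hZt ▸ mem_zpowers t)
    ⟨hab, ht.symm, hA.symm, hB.symm⟩
  refine ⟨x, y, t, m, hm, ?_, hZt, hcm, ?_, ?_⟩
  · rw [← hxy.closure_sup_center, hZt, zpowers_eq_closure, ← Subgroup.closure_union,
      Set.insert_union, Set.singleton_union]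
  · rw [← hG.commutatorElement_eq_inv_mul_inv_mul_mul_mul, hxy.commutatorElement_eq]
  · rcases hC with rfl | rfl
    · exact .inl ⟨by simpa using hxy.pow_left, by simpa using hxy.pow_right⟩
    · exact .inr ⟨by simpa using hxy.pow_left, by simpa using hxy.pow_right⟩

theorem rank_one_classification (p : ℕ) (hp : p.Prime) (G : Type*) [Group G]
    (hfg : Group.FG G)
    (hind : IsIndecomposable G)
    (hq : Nonempty ((G ⧸ Subgroup.center G) ≃*
      Multiplicative (ZMod p) × Multiplicative (ZMod p)))
    (hcyc : ∃ c : G, Subgroup.center G = Subgroup.zpowers c) :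
    ∃ (x y t₁ : G) (m₁ : ℕ), 1 ≤ m₁ ∧
      Subgroup.closure {x, y, t₁} = ⊤ ∧
      Subgroup.center G = Subgroup.zpowers t₁ ∧
      orderOf t₁ = p ^ m₁ ∧
      x⁻¹ * y⁻¹ * x * y = t₁ ^ p ^ (m₁ - 1) ∧
      ((x ^ p = 1 ∧ y ^ p = 1) ∨ (x ^ p = t₁ ∧ y ^ p = t₁)) :=
  rank_one_classification_general p hp G hind hq hcyc
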